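/- arXiv:1702.08545 — 7 statements merged into one kernel-verified Lean document; each statement's English description precedes it below -/
import Mathlib

section
/- For all finite sets S₁, S₂ of points in ℝ², the maxima set of S₁ ∪ S₂ equals the maxima set of Max(S₁) ∪ Max(S₂). (Hence computing the maxima set of a union reduces to merging the maxima sets of the parts.) -/
/-- `p` dominates `q` if `q.1 ≤ p.1` and `q.2 ≤ p.2`. -/
def Dominates (p q : ℝ × ℝ) : Prop := q.1 ≤ p.1 ∧ q.2 ≤ p.2

/-- The maxima set of a set `S` of planar points: the points of `S`
dominated by no other point of `S`. -/
def MaxSet (S : Set (ℝ × ℝ)) : Set (ℝ × ℝ) :=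
  {p | p ∈ S ∧ ∀ q ∈ S, q ≠ p → ¬ Dominates q p}

/-! Domination is the product order on `ℝ × ℝ`, so `MaxSet S` is the set of maximal elements of `S`.
Every point of a finite set lies below one of its maximal points; hence every point of `S₁ ∪ S₂`
lies below a point of `MaxSet S₁ ∪ MaxSet S₂ ⊆ S₁ ∪ S₂`, and a cofinal subset has the same maximal
elements as the whole set. -/

lemma dominates_iff_le {p q : ℝ × ℝ} : Dominates p q ↔ q ≤ p := Prod.le_def.symm

lemma mem_maxSet_iff {S : Set (ℝ × ℝ)} {p : ℝ × ℝ} : p ∈ MaxSet S ↔ Maximal (· ∈ S) p := by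
  simp only [MaxSet, Set.mem_ofPred_eq, dominates_iff_le, maximal_mem_iff]
  refine and_congr_right fun _ => forall₂_congr fun q _ => ?_
  constructor
  · exact fun h hpq => by_contra fun hne => h (Ne.symm hne) hpq
  · exact fun h hne hpq => hne (h hpq).symm

lemma maxSet_subset (S : Set (ℝ × ℝ)) : MaxSet S ⊆ S := fun _ hp => hp.1

lemma Set.Finite.exists_le_mem_maxSet {S : Set (ℝ × ℝ)} (hS : S.Finite) {q : ℝ × ℝ} (hq : q ∈ S) :
    ∃ m ∈ MaxSet S, q ≤ m := by
  obtain ⟨m, hqm, hm⟩ := hS.exists_le_maximal hq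
  exact ⟨m, mem_maxSet_iff.2 hm, hqm⟩

theorem maxSet_union_eq_maxSet_of_maxSets (S₁ S₂ : Finset (ℝ × ℝ)) :
    MaxSet (↑S₁ ∪ ↑S₂) = MaxSet (MaxSet ↑S₁ ∪ MaxSet ↑S₂) := by
  ext p
  simp only [mem_maxSet_iff]
  refine maximal_iff_maximal_of_imp_of_forall
    (Set.union_subset_union (maxSet_subset _) (maxSet_subset _)) ?_
  rintro q (hq | hq)
  · obtain ⟨m, hm, hqm⟩ := S₁.finite_toSet.exists_le_mem_maxSet hq
    exact ⟨m, hqm, .inl hm⟩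
  · obtain ⟨m, hm, hqm⟩ := S₂.finite_toSet.exists_le_mem_maxSet hq
    exact ⟨m, hqm, .inr hm⟩
end

section
/- Soundness of maximality arguments (first variant): Let M be a maxima sequence with indices a ≤ b, and let N₁, …, N_t be maxima sequences with chosen indices a₁, …, a_t, all points of M, N₁, …, N_t being pairwise distinct. Suppose that M(b) dominates N_k(a_k) for every k, and that for every k, either a_k is the first index of N_k or the x-coordinate of N_k(a_k − 1) is strictly less than the x-coordinate of M(a). Then every point M(p) with a ≤ p ≤ b is maximal in the union of the sets of points of M, N₁, …, N_t. -/
/-- `p` is a maximal point of the set `S`. -/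
def MaximalInSet (S : Set (ℝ × ℝ)) (p : ℝ × ℝ) : Prop :=
  p ∈ S ∧ ∀ q ∈ S, q ≠ p → ¬ Dominates q p

/-- A maxima sequence: strictly increasing `x`-coordinates and strictly
decreasing `y`-coordinates. -/
def IsMaximaSeq {n : ℕ} (M : Fin n → ℝ × ℝ) : Prop :=
  (StrictMono fun i => (M i).1) ∧ (StrictAnti fun i => (M i).2)

/-! Let `p = M p'` with `a ≤ p' ≤ b`. No other point of `M` dominates it, since `M` is a maxima
sequence. A point of `N k` before `aIdx k` lies strictly left of `M a`, hence of `p`. A point of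
`N k` from `aIdx k` on lies no higher than `N k (aIdx k)`, hence than `M b`, hence than `p`; if it
dominated `p`, all these heights would coincide, forcing `p' = b`, the point to be `N k (aIdx k)`,
and then `M b = N k (aIdx k)`, against distinctness. -/

theorem Dominates.antisymm {p q : ℝ × ℝ} (hpq : Dominates p q) (hqp : Dominates q p) :
    p = q :=
  Prod.ext (le_antisymm hqp.1 hpq.1) (le_antisymm hqp.2 hpq.2)

namespace IsMaximaSeq

variable {n m : ℕ} {M : Fin n → ℝ × ℝ} {N : Fin m → ℝ × ℝ}

theorem eq_of_dominates (hM : IsMaximaSeq M) {i j : Fin n} (h : Dominates (M i) (M j)) :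
    i = j :=
  le_antisymm ((StrictAnti.le_iff_ge hM.2).mp h.2) ((StrictMono.le_iff_le hM.1).mp h.1)

theorem fst_lt_of_lt (hN : IsMaximaSeq N) {a j : Fin m} {x : ℝ}
    (hprev : (a : ℕ) = 0 ∨
      ∃ _ : 0 < (a : ℕ), (N ⟨(a : ℕ) - 1, Nat.lt_of_le_of_lt (Nat.sub_le _ _) a.isLt⟩).1 < x)
    (hj : j < a) : (N j).1 < x := by
  rcases hprev with ha | ⟨_, hx⟩
  · exact absurd hj (by simp [Fin.lt_def, ha])
  · refine lt_of_le_of_lt (hN.1.monotone ?_) hx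
    rw [Fin.le_def]
    exact Nat.le_sub_one_of_lt hj

theorem not_dominates_of_le (hM : IsMaximaSeq M) (hN : IsMaximaSeq N) {p b : Fin n}
    {a j : Fin m} (hpb : p ≤ b) (haj : a ≤ j) (hdom : Dominates (M b) (N a)) (hne : M b ≠ N a) :
    ¬ Dominates (N j) (M p) := by
  intro h
  have hy : (M p).2 ≤ (M b).2 :=
    calc (M p).2 ≤ (N j).2 := h.2
      _ ≤ (N a).2 := hN.2.antitone haj
      _ ≤ (M b).2 := hdom.2
  obtain rfl : p = b := le_antisymm hpb ((StrictAnti.le_iff_ge hM.2).mp hy)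
  obtain rfl : j = a := le_antisymm ((StrictAnti.le_iff_ge hN.2).mp (hdom.2.trans h.2)) haj
  exact hne (hdom.antisymm h)

end IsMaximaSeq

theorem maximality_argument_sound_first_variant_general
    {n t : ℕ} (M : Fin n → ℝ × ℝ) (hM : IsMaximaSeq M)
    (a b : Fin n)
    (nk : Fin t → ℕ) (N : ∀ k : Fin t, Fin (nk k) → ℝ × ℝ)
    (hN : ∀ k, IsMaximaSeq (N k))
    (aIdx : ∀ k : Fin t, Fin (nk k))
    -- all points of `M`, `N₁, …, N_t` are pairwise distinct:
    (hdist₁ : ∀ (k : Fin t) (i : Fin n) (j : Fin (nk k)), M i ≠ N k j)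
    -- `M b` dominates `N k (aIdx k)` for every `k`:
    (hdom : ∀ k, Dominates (M b) (N k (aIdx k)))
    -- for every `k`, either `aIdx k` is the first index of `N k`, or the
    -- `x`-coordinate of the previous point is strictly less than that of `M a`:
    (hfirst : ∀ k, (aIdx k : ℕ) = 0 ∨
      ∃ _ : 0 < (aIdx k : ℕ),
        (N k ⟨(aIdx k : ℕ) - 1,
          Nat.lt_of_le_of_lt (Nat.sub_le _ _) (aIdx k).isLt⟩).1 < (M a).1) :
    ∀ p : Fin n, a ≤ p → p ≤ b →
      MaximalInSet (Set.range M ∪ ⋃ k, Set.range (N k)) (M p) := by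
  intro p hap hpb
  refine ⟨Or.inl ⟨p, rfl⟩, ?_⟩
  rintro q (⟨i, rfl⟩ | hq) hne hdq
  · exact hne (congrArg M (hM.eq_of_dominates hdq))
  · obtain ⟨k, j, rfl⟩ := Set.mem_iUnion.mp hq
    rcases lt_or_ge j (aIdx k) with hj | hj
    · have hleft : (N k j).1 < (M p).1 :=
        ((hN k).fst_lt_of_lt (hfirst k) hj).trans_le (hM.1.monotone hap)
      exact hleft.not_ge hdq.1
    · exact hM.not_dominates_of_le (hN k) hpb hj (hdom k) (hdist₁ k b (aIdx k)) hdq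

theorem maximality_argument_sound_first_variant
    {n t : ℕ} (M : Fin n → ℝ × ℝ) (hM : IsMaximaSeq M)
    (a b : Fin n) (hab : a ≤ b)
    (nk : Fin t → ℕ) (N : ∀ k : Fin t, Fin (nk k) → ℝ × ℝ)
    (hN : ∀ k, IsMaximaSeq (N k))
    (aIdx : ∀ k : Fin t, Fin (nk k))
    -- all points of `M`, `N₁, …, N_t` are pairwise distinct:
    (hdist₁ : ∀ (k : Fin t) (i : Fin n) (j : Fin (nk k)), M i ≠ N k j)
    (hdist₂ : ∀ (k k' : Fin t), k ≠ k' →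
      ∀ (i : Fin (nk k)) (j : Fin (nk k')), N k i ≠ N k' j)
    -- `M b` dominates `N k (aIdx k)` for every `k`:
    (hdom : ∀ k, Dominates (M b) (N k (aIdx k)))
    -- for every `k`, either `aIdx k` is the first index of `N k`, or the
    -- `x`-coordinate of the previous point is strictly less than that of `M a`:
    (hfirst : ∀ k, (aIdx k : ℕ) = 0 ∨
      ∃ _ : 0 < (aIdx k : ℕ),
        (N k ⟨(aIdx k : ℕ) - 1,
          Nat.lt_of_le_of_lt (Nat.sub_le _ _) (aIdx k).isLt⟩).1 < (M a).1) :
    ∀ p : Fin n, a ≤ p → p ≤ b →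
      MaximalInSet (Set.range M ∪ ⋃ k, Set.range (N k)) (M p) :=
  maximality_argument_sound_first_variant_general M hM a b nk N hN aIdx hdist₁ hdom hfirst
end

section
/- Let u(0), …, u(n−1) be an upper hull sequence, let μ ∈ ℝ, and let d be an index such that (d = 0 or m(u(d−1), u(d)) ≥ μ) and (d = n−1 or μ ≥ m(u(d), u(d+1))). Then for every index i, u(i).2 − μ·u(i).1 ≤ u(d).2 − μ·u(d).1; that is, u(d) maximizes y − μ·x among all points of the chain, so u(d) is the point of the chain admitting a supporting line of slope μ. -/
/-- The slope of the line through `p` and `q`. -/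
noncomputable def slopeOf (p q : ℝ × ℝ) : ℝ := (q.2 - p.2) / (q.1 - p.1)

/-- An upper hull sequence: strictly increasing `x`-coordinates with strictly
decreasing consecutive slopes. -/
def IsUpperHullSeq {n : ℕ} (u : Fin n → ℝ × ℝ) : Prop :=
  (StrictMono fun i => (u i).1) ∧
  ∀ (i : ℕ) (h : i + 2 < n),
    slopeOf (u ⟨i + 1, by omega⟩) (u ⟨i + 2, h⟩) <
      slopeOf (u ⟨i, by omega⟩) (u ⟨i + 1, by omega⟩)

/-- The slope `μ` is "sandwiched" at index `i` of the chain `u`: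
`(i = 0 or m(u(i−1), u(i)) ≥ μ)` and `(i = n−1 or μ ≥ m(u(i), u(i+1)))`. -/
def Sandwiched {n : ℕ} (u : Fin n → ℝ × ℝ) (i : Fin n) (μ : ℝ) : Prop :=
  ((i : ℕ) = 0 ∨
    ∃ _ : 0 < (i : ℕ),
      μ ≤ slopeOf (u ⟨(i : ℕ) - 1, Nat.lt_of_le_of_lt (Nat.sub_le _ _) i.isLt⟩) (u i)) ∧
  ((i : ℕ) = n - 1 ∨
    ∃ h : (i : ℕ) + 1 < n, slopeOf (u i) (u ⟨(i : ℕ) + 1, h⟩) ≤ μ)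

/-!
Between consecutive points the height `y - μ x` changes by `(slope - μ) * Δx` with `Δx > 0`.
The consecutive slopes of an upper hull decrease, so the sandwich condition at `d` makes them
`≥ μ` before `d` and `≤ μ` from `d` on: the height increases up to `u d` and decreases after it.
-/

open Order Set

namespace Fin

variable {n : ℕ}

theorem orderSucc_eq_mk {i : Fin n} (h : (i : ℕ) + 1 < n) : Order.succ i = ⟨i + 1, h⟩ :=
  CovBy.succ_eq (Fin.covBy_iff.2 (Nat.covBy_iff_add_one_eq.2 rfl))

theorem not_isMax_iff_add_one_lt {i : Fin n} : ¬IsMax i ↔ (i : ℕ) + 1 < n := by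
  rw [not_isMax_iff]
  constructor
  · rintro ⟨j, hij⟩
    have := Fin.lt_def.1 hij
    omega
  · exact fun h => ⟨⟨i + 1, h⟩, Fin.lt_def.2 (Nat.lt_succ_self _)⟩

end Fin

section Slope

variable {p q : ℝ × ℝ}

theorem le_slopeOf_iff (h : p.1 < q.1) (μ : ℝ) :
    μ ≤ slopeOf p q ↔ p.2 - μ * p.1 ≤ q.2 - μ * q.1 := by
  rw [slopeOf, le_div_iff₀ (sub_pos.2 h)]
  constructor <;> intro <;> linarith

theorem slopeOf_le_iff (h : p.1 < q.1) (μ : ℝ) :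
    slopeOf p q ≤ μ ↔ q.2 - μ * q.1 ≤ p.2 - μ * p.1 := by
  rw [slopeOf, div_le_iff₀ (sub_pos.2 h)]
  constructor <;> intro <;> linarith

end Slope

section Height

variable {α : Type*} [PartialOrder α] [SuccOrder α] [IsSuccArchimedean α]
  {u : α → ℝ × ℝ} {μ : ℝ} {d : α}

theorem monotoneOn_Iic_of_le_slopeOf_succ (hx : StrictMono fun i => (u i).1)
    (hμ : ∀ a < d, μ ≤ slopeOf (u a) (u (succ a))) :
    MonotoneOn (fun i => (u i).2 - μ * (u i).1) (Iic d) :=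
  monotoneOn_of_le_succ ordConnected_Iic fun a ha _ hsa =>
    (le_slopeOf_iff (hx (lt_succ_of_not_isMax ha)) μ).1
      (hμ a ((lt_succ_of_not_isMax ha).trans_le hsa))

theorem antitoneOn_Ici_of_slopeOf_succ_le (hx : StrictMono fun i => (u i).1)
    (hμ : ∀ a, d ≤ a → ¬IsMax a → slopeOf (u a) (u (succ a)) ≤ μ) :
    AntitoneOn (fun i => (u i).2 - μ * (u i).1) (Ici d) :=
  antitoneOn_of_succ_le ordConnected_Ici fun a ha hda _ =>
    (slopeOf_le_iff (hx (lt_succ_of_not_isMax ha)) μ).1 (hμ a hda ha)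

end Height

namespace IsUpperHullSeq

variable {n : ℕ} {u : Fin n → ℝ × ℝ} {μ : ℝ} {a d : Fin n}

theorem antitoneOn_slopeOf_succ (hu : IsUpperHullSeq u) :
    AntitoneOn (fun i => slopeOf (u i) (u (succ i))) {i | ¬IsMax i} := by
  refine antitoneOn_of_succ_le ⟨fun _ _ _ hb _ hc hcmax => hb (hcmax.mono hc.2)⟩ ?_
  intro a ha _ hsa
  have ha' := Fin.not_isMax_iff_add_one_lt.1 ha
  have hsa' := Fin.not_isMax_iff_add_one_lt.1 hsa
  rw [Fin.orderSucc_eq_mk ha'] at hsa' ⊢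
  rw [Fin.orderSucc_eq_mk hsa']
  exact (hu.2 a hsa').le

theorem le_slopeOf_succ_of_lt (hu : IsUpperHullSeq u) (hd : Sandwiched u d μ) (had : a < d) :
    μ ≤ slopeOf (u a) (u (succ a)) := by
  have hdpos : (d : ℕ) ≠ 0 := by have := Fin.lt_def.1 had; omega
  obtain ⟨-, hμ⟩ := hd.1.resolve_left hdpos
  set p : Fin n := ⟨d - 1, by omega⟩
  have hpd : p < d := Fin.lt_def.2 (by simp only [p]; omega)
  have hap : a ≤ p := Fin.le_def.2 (by have := Fin.lt_def.1 had; simp only [p]; omega)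
  have hsucc : succ p = d := by
    rw [Fin.orderSucc_eq_mk (by simp only [p]; omega)]
    ext
    simp only [p]
    omega
  calc μ ≤ slopeOf (u p) (u d) := hμ
    _ = slopeOf (u p) (u (succ p)) := by rw [hsucc]
    _ ≤ slopeOf (u a) (u (succ a)) :=
      hu.antitoneOn_slopeOf_succ (not_isMax_of_lt had) (not_isMax_of_lt hpd) hap

theorem slopeOf_succ_le_of_le (hu : IsUpperHullSeq u) (hd : Sandwiched u d μ) (hda : d ≤ a)
    (ha : ¬IsMax a) : slopeOf (u a) (u (succ a)) ≤ μ := by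
  have hdmax : ¬IsMax d := fun h => ha (h.mono hda)
  have hd' := Fin.not_isMax_iff_add_one_lt.1 hdmax
  obtain ⟨_, hμ⟩ := hd.2.resolve_left (by omega)
  calc slopeOf (u a) (u (succ a)) ≤ slopeOf (u d) (u (succ d)) :=
        hu.antitoneOn_slopeOf_succ hdmax ha hda
    _ ≤ μ := by rwa [Fin.orderSucc_eq_mk hd']

end IsUpperHullSeq

theorem supporting_line_maximizer
    {n : ℕ} (u : Fin n → ℝ × ℝ) (hu : IsUpperHullSeq u)
    (μ : ℝ) (d : Fin n) (hd : Sandwiched u d μ) :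
    ∀ i : Fin n, (u i).2 - μ * (u i).1 ≤ (u d).2 - μ * (u d).1 := by
  intro i
  rcases le_total i d with hid | hdi
  · exact monotoneOn_Iic_of_le_slopeOf_succ hu.1
      (fun _ ha => hu.le_slopeOf_succ_of_lt hd ha) hid (mem_Iic.2 le_rfl) hid
  · exact antitoneOn_Ici_of_slopeOf_succ_le hu.1
      (fun _ hda ha => hu.slopeOf_succ_le_of_le hd hda ha) (mem_Ici.2 le_rfl) hdi hdi
end

section
/- Soundness of elementary convex arguments: Let U and N₁, …, N_t be upper hull sequences, let a be an index of U and b₁, …, b_t indices of N₁, …, N_t respectively, and let m_ℓ ∈ ℝ. Suppose that: (i) (a = 0 or m(U(a−1), U(a)) ≥ m_ℓ) and (a is the last index of U or m_ℓ ≥ m(U(a), U(a+1))); (ii) for every k, (b_k = 0 or m(N_k(b_k−1), N_k(b_k)) ≥ m_ℓ) and (b_k is the last index of N_k or m_ℓ ≥ m(N_k(b_k), N_k(b_k+1))); and (iii) for every k, N_k(b_k).2 ≤ U(a).2 + m_ℓ·(N_k(b_k).1 − U(a).1). Then U(a) is an upper-hull point of the union of the sets of points of U, N₁, …, N_t. 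-/
/-- `p` is an upper-hull point of `S`: it belongs to `S` and admits a
supporting line of some slope `m` lying above all of `S`. -/
def IsUpperHullPoint (S : Set (ℝ × ℝ)) (p : ℝ × ℝ) : Prop :=
  p ∈ S ∧ ∃ m : ℝ, ∀ q ∈ S, q.2 ≤ p.2 + m * (q.1 - p.1)

/-
Write `b_μ(p) = p.2 - μ * p.1` for the intercept of the line of slope `μ` through `p`; a point lies
below the line of slope `μ` through `p` exactly when its intercept is at most `b_μ(p)`. Along an
upper hull sequence `b_μ` increases across edges of slope `≥ μ` and decreases across edges of slope
`≤ μ`. Since the edge slopes decrease, at a sandwiched index every earlier edge has slope `≥ μ` and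
every later one slope `≤ μ`, so `b_μ` is maximal there. Comparing intercepts is transitive, which
carries the bound from each `N k (bIdx k)` over to all of `N k`.
-/

def yIntercept (μ : ℝ) (p : ℝ × ℝ) : ℝ := p.2 - μ * p.1

lemma le_add_mul_sub_iff_yIntercept_le {p q : ℝ × ℝ} {μ : ℝ} :
    q.2 ≤ p.2 + μ * (q.1 - p.1) ↔ yIntercept μ q ≤ yIntercept μ p := by
  unfold yIntercept
  constructor <;> intro h <;> linarith

lemma yIntercept_le_of_slopeOf_le {p q : ℝ × ℝ} {μ : ℝ} (hpq : p.1 < q.1)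
    (h : slopeOf p q ≤ μ) : yIntercept μ q ≤ yIntercept μ p := by
  rw [slopeOf, div_le_iff₀ (sub_pos.2 hpq)] at h
  unfold yIntercept
  linarith

lemma yIntercept_le_of_le_slopeOf {p q : ℝ × ℝ} {μ : ℝ} (hpq : p.1 < q.1)
    (h : μ ≤ slopeOf p q) : yIntercept μ p ≤ yIntercept μ q := by
  rw [slopeOf, le_div_iff₀ (sub_pos.2 hpq)] at h
  unfold yIntercept
  linarith

namespace IsUpperHullSeq

variable {n : ℕ} {u : Fin n → ℝ × ℝ}

lemma fst_lt_fst_succ (hu : IsUpperHullSeq u) {i : ℕ} (hi : i + 1 < n) :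
    (u ⟨i, by omega⟩).1 < (u ⟨i + 1, hi⟩).1 :=
  hu.1 (Fin.mk_lt_mk.2 i.lt_succ_self)

lemma slopeOf_succ_le (hu : IsUpperHullSeq u) {i j : ℕ} (hij : i ≤ j) (hj : j + 1 < n) :
    slopeOf (u ⟨j, by omega⟩) (u ⟨j + 1, hj⟩) ≤
      slopeOf (u ⟨i, by omega⟩) (u ⟨i + 1, by omega⟩) := by
  induction j, hij using Nat.le_induction with
  | base => rfl
  | succ j hij ih => exact (hu.2 j hj).le.trans (ih (by omega))

lemma yIntercept_le_of_slopeOf_le_of_le (hu : IsUpperHullSeq u) {μ : ℝ} {i : ℕ} (hi : i + 1 < n)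
    (hμ : slopeOf (u ⟨i, by omega⟩) (u ⟨i + 1, hi⟩) ≤ μ) {j : ℕ} (hij : i ≤ j) (hj : j < n) :
    yIntercept μ (u ⟨j, hj⟩) ≤ yIntercept μ (u ⟨i, by omega⟩) := by
  induction j, hij using Nat.le_induction with
  | base => rfl
  | succ j hij ih =>
    exact (yIntercept_le_of_slopeOf_le (hu.fst_lt_fst_succ hj)
      ((hu.slopeOf_succ_le hij hj).trans hμ)).trans (ih (by omega))

lemma yIntercept_le_of_le_slopeOf_of_le (hu : IsUpperHullSeq u) {μ : ℝ} {j i : ℕ} (hji : j ≤ i)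
    (hi : i + 1 < n) (hμ : μ ≤ slopeOf (u ⟨i, by omega⟩) (u ⟨i + 1, hi⟩)) :
    yIntercept μ (u ⟨j, by omega⟩) ≤ yIntercept μ (u ⟨i + 1, hi⟩) := by
  induction i, hji using Nat.le_induction with
  | base => exact yIntercept_le_of_le_slopeOf (hu.fst_lt_fst_succ hi) hμ
  | succ i hji ih =>
    have hμ' : μ ≤ slopeOf (u ⟨i, by omega⟩) (u ⟨i + 1, by omega⟩) :=
      hμ.trans (hu.slopeOf_succ_le i.le_succ hi)
    exact (ih (by omega) hμ').trans
      (yIntercept_le_of_le_slopeOf (hu.fst_lt_fst_succ hi) hμ)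

theorem yIntercept_le_of_sandwiched (hu : IsUpperHullSeq u) {i : Fin n} {μ : ℝ}
    (hs : Sandwiched u i μ) (j : Fin n) : yIntercept μ (u j) ≤ yIntercept μ (u i) := by
  obtain ⟨i, hi⟩ := i
  obtain ⟨j, hj⟩ := j
  obtain ⟨hleft, hright⟩ := hs
  rcases lt_trichotomy j i with hji | rfl | hij
  · obtain ⟨i, rfl⟩ : ∃ i', i = i' + 1 := ⟨i - 1, by omega⟩
    obtain ⟨-, hμ⟩ := hleft.resolve_left i.succ_ne_zero
    exact hu.yIntercept_le_of_le_slopeOf_of_le (by omega) hi hμ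
  · rfl
  · obtain ⟨hi1, hμ⟩ := hright.resolve_left (by rw [Fin.val_mk]; omega)
    exact hu.yIntercept_le_of_slopeOf_le_of_le hi1 hμ hij.le hj

end IsUpperHullSeq

theorem elementary_convex_argument_sound
    {n t : ℕ} (U : Fin n → ℝ × ℝ) (hU : IsUpperHullSeq U)
    (nk : Fin t → ℕ) (N : ∀ k : Fin t, Fin (nk k) → ℝ × ℝ)
    (hN : ∀ k, IsUpperHullSeq (N k))
    (a : Fin n) (bIdx : ∀ k : Fin t, Fin (nk k)) (mℓ : ℝ)
    (ha : Sandwiched U a mℓ)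
    (hb : ∀ k, Sandwiched (N k) (bIdx k) mℓ)
    (hbelow : ∀ k, (N k (bIdx k)).2 ≤ (U a).2 + mℓ * ((N k (bIdx k)).1 - (U a).1)) :
    IsUpperHullPoint (Set.range U ∪ ⋃ k, Set.range (N k)) (U a) := by
  refine ⟨Or.inl ⟨a, rfl⟩, mℓ, ?_⟩
  rintro q (⟨j, rfl⟩ | hq)
  · exact le_add_mul_sub_iff_yIntercept_le.2 (hU.yIntercept_le_of_sandwiched ha j)
  · obtain ⟨k, j, rfl⟩ := Set.mem_iUnion.1 hq
    exact le_add_mul_sub_iff_yIntercept_le.2 <|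
      ((hN k).yIntercept_le_of_sandwiched (hb k) j).trans
        (le_add_mul_sub_iff_yIntercept_le.1 (hbelow k))
end

section
/- Soundness of block convex arguments: Let U and N₁, …, N_t be upper hull sequences, let a < b be indices of U, and write m_ℓ = m(U(a), U(b)). Suppose there exist slopes m_a, m_b ∈ ℝ and, for every k, indices c_k, d_k, e_k of N_k such that: (i) m_a is sandwiched at a in U and m_b is sandwiched at b in U (where a slope μ is 'sandwiched at index i in a chain u' if (i = 0 or m(u(i−1), u(i)) ≥ μ) and (i is the last index or μ ≥ m(u(i), u(i+1)))); (ii) for every k, m_a is sandwiched at c_k in N_k and N_k(c_k).2 ≤ U(a).2 + m_a·(N_k(c_k).1 − U(a).1); (iii) for every k, m_b is sandwiched at e_k in N_k and N_k(e_k).2 ≤ U(b).2 + m_b·(N_k(e_k).1 − U(b).1); (iv) for every k, m_ℓ is sandwiched at d_k in N_k and N_k(d_k).2 ≤ U(a).2 + m_ℓ·(N_k(d_k).1 − U(a).1). Then every point U(p) with a ≤ p ≤ b is an upper-hull point of the union of the sets of points of U, N₁, …, N_t. -/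
/-!
Every `U p` with `a ≤ p ≤ b` admits a slope `μ`, with `mb ≤ μ ≤ ma`, sandwiched at `p` in `U`
(`ma` at `a`, `mb` at `b`, the slope of the next segment in between). A slope sandwiched at a
point of an upper hull sequence supports the whole sequence, so by (ii)–(iv) every point of
every `N k` lies below the tangent of slope `ma` at `U a`, the chord from `U a` to `U b`, and the
tangent of slope `mb` at `U b`. That region lies below the line of slope `μ` through `U p`:
`U a` and `U b` do, and the tangents are steeper, resp. flatter, than that line.
-/

def BelowLine (P : ℝ × ℝ) (μ : ℝ) (q : ℝ × ℝ) : Prop :=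
  q.2 ≤ P.2 + μ * (q.1 - P.1)

theorem belowLine_iff_slopeOf_le {q r : ℝ × ℝ} {μ : ℝ} (h : q.1 < r.1) :
    BelowLine q μ r ↔ slopeOf q r ≤ μ := by
  rw [BelowLine, slopeOf, div_le_iff₀ (sub_pos.2 h)]
  constructor <;> intro <;> linarith

theorem belowLine_iff_le_slopeOf {q r : ℝ × ℝ} {μ : ℝ} (h : q.1 < r.1) :
    BelowLine r μ q ↔ μ ≤ slopeOf q r := by
  rw [BelowLine, slopeOf, le_div_iff₀ (sub_pos.2 h)]
  constructor <;> intro <;> linarith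

namespace BelowLine

theorem refl (P : ℝ × ℝ) (μ : ℝ) : BelowLine P μ P := by
  simp [BelowLine]

theorem trans {P Q R : ℝ × ℝ} {μ : ℝ} (hQ : BelowLine P μ Q) (hR : BelowLine Q μ R) :
    BelowLine P μ R := by
  unfold BelowLine at *
  linarith

theorem mono_slope_of_le {P q : ℝ × ℝ} {μ ν : ℝ} (hq : q.1 ≤ P.1) (hμν : μ ≤ ν)
    (h : BelowLine P ν q) : BelowLine P μ q := by
  unfold BelowLine at *
  nlinarith

theorem mono_slope_of_ge {P q : ℝ × ℝ} {μ ν : ℝ} (hq : P.1 ≤ q.1) (hνμ : ν ≤ μ)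
    (h : BelowLine P ν q) : BelowLine P μ q := by
  unfold BelowLine at *
  nlinarith

/-- Over `[A.1, B.1]` the chord is a convex combination of `A` and `B`, both below the line. -/
theorem of_chord {P A B q : ℝ × ℝ} {μ : ℝ} (hAB : A.1 < B.1) (hAq : A.1 ≤ q.1) (hqB : q.1 ≤ B.1)
    (hA : BelowLine P μ A) (hB : BelowLine P μ B) (hq : BelowLine A (slopeOf A B) q) :
    BelowLine P μ q := by
  unfold BelowLine at *
  have hchord : slopeOf A B * (B.1 - A.1) = B.2 - A.2 :=
    div_mul_cancel₀ _ (sub_ne_zero.2 hAB.ne')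
  have hA' := mul_le_mul_of_nonneg_left hA (sub_nonneg.2 hqB)
  have hB' := mul_le_mul_of_nonneg_left hB (sub_nonneg.2 hAq)
  have key : (B.1 - A.1) * (A.2 + slopeOf A B * (q.1 - A.1)) ≤
      (B.1 - A.1) * (P.2 + μ * (q.1 - P.1)) := by
    nlinarith
  have := le_of_mul_le_mul_left key (sub_pos.2 hAB)
  linarith

theorem of_below_tangents_and_chord {P A B q : ℝ × ℝ} {μ ma mb : ℝ} (hAB : A.1 < B.1)
    (hmb : mb ≤ μ) (hma : μ ≤ ma) (hA : BelowLine P μ A) (hB : BelowLine P μ B)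
    (hqA : BelowLine A ma q) (hqB : BelowLine B mb q) (hqAB : BelowLine A (slopeOf A B) q) :
    BelowLine P μ q := by
  rcases le_total q.1 A.1 with hq | hAq
  · exact hA.trans (hqA.mono_slope_of_le hq hma)
  rcases le_total B.1 q.1 with hq | hqB'
  · exact hB.trans (hqB.mono_slope_of_ge hq hmb)
  · exact of_chord hAB hAq hqB' hA hB hqAB

end BelowLine

section UpperHull

variable {n : ℕ} {u : Fin n → ℝ × ℝ}

theorem IsUpperHullSeq.slopeOf_succ_antitone (hu : IsUpperHullSeq u) {i j : ℕ} (hij : i ≤ j)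
    (hj : j + 1 < n) :
    slopeOf (u ⟨j, by omega⟩) (u ⟨j + 1, hj⟩) ≤ slopeOf (u ⟨i, by omega⟩) (u ⟨i + 1, by omega⟩) := by
  induction j, hij using Nat.le_induction with
  | base => exact le_rfl
  | succ j hij ih => exact (hu.2 j hj).le.trans (ih (by omega))

theorem IsUpperHullSeq.sandwiched_slopeOf_succ (hu : IsUpperHullSeq u) {i : ℕ} (hi : i + 1 < n) :
    Sandwiched u ⟨i, by omega⟩ (slopeOf (u ⟨i, by omega⟩) (u ⟨i + 1, hi⟩)) := by
  refine ⟨?_, Or.inr ⟨hi, le_rfl⟩⟩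
  cases i with
  | zero => exact Or.inl rfl
  | succ i => exact Or.inr ⟨i.succ_pos, (hu.2 i hi).le⟩

theorem Sandwiched.slopeOf_succ_le (hu : IsUpperHullSeq u) {i : Fin n} {μ : ℝ}
    (hs : Sandwiched u i μ) {j : ℕ} (hij : (i : ℕ) ≤ j) (hj : j + 1 < n) :
    slopeOf (u ⟨j, by omega⟩) (u ⟨j + 1, hj⟩) ≤ μ := by
  obtain ⟨hi, hslope⟩ := hs.2.resolve_left (by omega)
  exact (hu.slopeOf_succ_antitone hij hj).trans hslope

theorem Sandwiched.le_slopeOf_succ (hu : IsUpperHullSeq u) {i : Fin n} {μ : ℝ}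
    (hs : Sandwiched u i μ) {j : ℕ} (hji : j < i) :
    μ ≤ slopeOf (u ⟨j, by omega⟩) (u ⟨j + 1, by omega⟩) := by
  obtain ⟨hi, hslope⟩ := hs.1.resolve_left (by omega)
  have hpred : (⟨(i : ℕ) - 1 + 1, by omega⟩ : Fin n) = i := Fin.ext (Nat.sub_add_cancel hi)
  have := hu.slopeOf_succ_antitone (i := j) (j := (i : ℕ) - 1) (by omega) (by omega)
  rw [hpred] at this
  exact hslope.trans this

theorem Sandwiched.belowLine (hu : IsUpperHullSeq u) {i : Fin n} {μ : ℝ}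
    (hs : Sandwiched u i μ) (j : Fin n) : BelowLine (u i) μ (u j) := by
  obtain ⟨j, hj⟩ := j
  rcases le_total (i : ℕ) j with hij | hji
  · induction j, hij using Nat.le_induction with
    | base => exact BelowLine.refl _ _
    | succ j hij ih =>
      refine (ih (by omega)).trans ((belowLine_iff_slopeOf_le (hu.1 ?_)).2 ?_)
      · simp [Fin.lt_def]
      · exact hs.slopeOf_succ_le hu hij hj
  · induction hji using Nat.decreasingInduction with
    | self => exact BelowLine.refl _ _
    | of_succ j hji ih =>
      refine (ih (by omega)).trans ((belowLine_iff_le_slopeOf (hu.1 ?_)).2 ?_)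
      · simp [Fin.lt_def]
      · exact hs.le_slopeOf_succ hu hji

theorem IsUpperHullSeq.exists_sandwiched_between (hu : IsUpperHullSeq u) {a b p : Fin n}
    {ma mb : ℝ} (hab : a < b) (hap : a ≤ p) (hpb : p ≤ b) (ha : Sandwiched u a ma)
    (hb : Sandwiched u b mb) : ∃ μ, Sandwiched u p μ ∧ mb ≤ μ ∧ μ ≤ ma := by
  rcases hpb.lt_or_eq with hpb | rfl
  · have hp : (p : ℕ) + 1 < n := by omega
    exact ⟨_, hu.sandwiched_slopeOf_succ hp, hb.le_slopeOf_succ hu hpb,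
      ha.slopeOf_succ_le hu hap hp⟩
  · have ha1 : (a : ℕ) + 1 < n := by omega
    exact ⟨mb, hb, le_rfl, (hb.le_slopeOf_succ hu hab).trans (ha.slopeOf_succ_le hu le_rfl ha1)⟩

end UpperHull

theorem block_convex_argument_sound
    {n t : ℕ} (U : Fin n → ℝ × ℝ) (hU : IsUpperHullSeq U)
    (nk : Fin t → ℕ) (N : ∀ k : Fin t, Fin (nk k) → ℝ × ℝ)
    (hN : ∀ k, IsUpperHullSeq (N k))
    (a b : Fin n) (hab : a < b)
    (ma mb : ℝ)
    (cIdx dIdx eIdx : ∀ k : Fin t, Fin (nk k))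
    -- (i) `ma` is sandwiched at `a` in `U` and `mb` is sandwiched at `b` in `U`:
    (hUa : Sandwiched U a ma) (hUb : Sandwiched U b mb)
    -- (ii) for every `k`, `ma` is sandwiched at `cIdx k` in `N k` and
    -- `N k (cIdx k)` lies below the line of slope `ma` through `U a`:
    (hc : ∀ k, Sandwiched (N k) (cIdx k) ma ∧
      (N k (cIdx k)).2 ≤ (U a).2 + ma * ((N k (cIdx k)).1 - (U a).1))
    -- (iii) for every `k`, `mb` is sandwiched at `eIdx k` in `N k` and
    -- `N k (eIdx k)` lies below the line of slope `mb` through `U b`: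
    (he : ∀ k, Sandwiched (N k) (eIdx k) mb ∧
      (N k (eIdx k)).2 ≤ (U b).2 + mb * ((N k (eIdx k)).1 - (U b).1))
    -- (iv) for every `k`, `m(U a, U b)` is sandwiched at `dIdx k` in `N k` and
    -- `N k (dIdx k)` lies below the line through `U a` and `U b`:
    (hd : ∀ k, Sandwiched (N k) (dIdx k) (slopeOf (U a) (U b)) ∧
      (N k (dIdx k)).2 ≤ (U a).2 + slopeOf (U a) (U b) * ((N k (dIdx k)).1 - (U a).1)) :
    ∀ p : Fin n, a ≤ p → p ≤ b →
      IsUpperHullPoint (Set.range U ∪ ⋃ k, Set.range (N k)) (U p) := by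
  intro p hap hpb
  obtain ⟨μ, hμ, hmb, hma⟩ := hU.exists_sandwiched_between hab hap hpb hUa hUb
  have hUp : ∀ j, BelowLine (U p) μ (U j) := hμ.belowLine hU
  refine ⟨Or.inl ⟨p, rfl⟩, μ, ?_⟩
  rintro q (⟨j, rfl⟩ | hq)
  · exact hUp j
  obtain ⟨k, j, rfl⟩ := Set.mem_iUnion.1 hq
  have hNk : ∀ {P : ℝ × ℝ} {m : ℝ} {i : Fin (nk k)},
      Sandwiched (N k) i m ∧ BelowLine P m (N k i) → BelowLine P m (N k j) :=
    fun h => h.2.trans (h.1.belowLine (hN k) j)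
  exact BelowLine.of_below_tangents_and_chord (hU.1 hab) hmb hma (hUp a) (hUp b)
    (hNk (hc k)) (hNk (he k)) (hNk (hd k))
end

section
/- Let b, c, d ≥ 0 be real numbers with c ≤ d + b, d ≤ c + b, c + b > 0 and d + b > 0, and let m₁, …, m_p and m′₁, …, m′_q be nonnegative real numbers with Σᵢ mᵢ ≥ c + b and Σⱼ m′ⱼ ≥ d + b. Then c + d ≤ Σᵢ mᵢ·log₂(1 + d/(c + b)) + Σⱼ m′ⱼ·log₂(1 + c/(d + b)). (This is the key inequality in the inductive analysis of the number of comparisons performed by the Quick Union Maxima algorithm.) -/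
/-!
On `[0, 1]` the concave function `x ↦ log₂ (1 + x)` lies above its chord `x`. With
`x = d / (c + b) ≤ 1` and `∑ mᵢ ≥ c + b` this gives `∑ mᵢ · log₂ (1 + d / (c + b)) ≥ d`, and
symmetrically the second sum is at least `c`.
-/

namespace Real

theorem le_logb_two_one_add {x : ℝ} (hx0 : 0 ≤ x) (hx1 : x ≤ 1) : x ≤ logb 2 (1 + x) := by
  rw [le_logb_iff_rpow_le one_lt_two (by linarith)]
  calc (2 : ℝ) ^ x = (1 + 1) ^ x := by norm_num
    _ ≤ 1 + x * 1 := rpow_one_add_le_one_add_mul_self (by norm_num) hx0 hx1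
    _ = 1 + x := by ring

theorem le_mul_logb_two_one_add_div {a d M : ℝ} (ha : 0 < a) (hd : 0 ≤ d) (hda : d ≤ a)
    (haM : a ≤ M) : d ≤ M * logb 2 (1 + d / a) := by
  have hx0 : 0 ≤ d / a := div_nonneg hd ha.le
  calc d = a * (d / a) := by field_simp
    _ ≤ M * logb 2 (1 + d / a) :=
      mul_le_mul haM (le_logb_two_one_add hx0 ((div_le_one ha).2 hda)) hx0 (ha.le.trans haM)

end Real

theorem quick_union_maxima_key_inequality_general
    (b c d : ℝ) (hc : 0 ≤ c) (hd : 0 ≤ d)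
    (hcb : c ≤ d + b) (hdb : d ≤ c + b)
    (hcb0 : 0 < c + b) (hdb0 : 0 < d + b)
    (p q : ℕ) (m : Fin p → ℝ) (m' : Fin q → ℝ)
    (hsum : c + b ≤ ∑ i, m i) (hsum' : d + b ≤ ∑ j, m' j) :
    c + d ≤ (∑ i, m i * Real.logb 2 (1 + d / (c + b))) +
      ∑ j, m' j * Real.logb 2 (1 + c / (d + b)) := by
  rw [← Finset.sum_mul, ← Finset.sum_mul]
  have hd_le := Real.le_mul_logb_two_one_add_div hcb0 hd hdb hsum
  have hc_le := Real.le_mul_logb_two_one_add_div hdb0 hc hcb hsum'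
  linarith

theorem quick_union_maxima_key_inequality
    (b c d : ℝ) (hb : 0 ≤ b) (hc : 0 ≤ c) (hd : 0 ≤ d)
    (hcb : c ≤ d + b) (hdb : d ≤ c + b)
    (hcb0 : 0 < c + b) (hdb0 : 0 < d + b)
    (p q : ℕ) (m : Fin p → ℝ) (m' : Fin q → ℝ)
    (hm : ∀ i, 0 ≤ m i) (hm' : ∀ j, 0 ≤ m' j)
    (hsum : c + b ≤ ∑ i, m i) (hsum' : d + b ≤ ∑ j, m' j) :
    c + d ≤ (∑ i, m i * Real.logb 2 (1 + d / (c + b))) +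
      ∑ j, m' j * Real.logb 2 (1 + c / (d + b)) :=
  quick_union_maxima_key_inequality_general b c d hc hd hcb hdb hcb0 hdb0 p q m m' hsum hsum'
end

section
/- There exists a constant C > 0 such that the following holds: for every real c > 0 and every function T : ℕ × ℕ → ℝ satisfying (i) 0 ≤ T(n, κ) for all n, κ, (ii) T(n, κ) ≤ c·n whenever n ≤ 1 or κ ≤ 1, and (iii) for all n ≥ 2 and κ ≥ 2 there exist positive integers κ₁, κ₂ with κ₁ + κ₂ ≤ κ + 1 and T(n, κ) ≤ T(⌈n/2⌉, κ₁) + T(⌊n/2⌋, κ₂) + c·n, one has T(n, κ) ≤ C·c·n·(1 + log₂ κ) for all n ≥ 1 and κ ≥ 1. (This is the solution of the recursion t(n, κ) ≤ t(⌈n/2⌉, κ₁) + t(⌊n/2⌋, κ₂) with κ₁ + κ₂ ≤ κ + 1 governing the divide-and-conquer convex hull algorithm for chains partitionable into κ simple subchains.) -/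
/-!
Put `L κ = 1 + log₂ κ` and prove `T(n, κ) ≤ 8 c n L κ` by strong induction on `n`. Since
`κ₁ + κ₂ ≤ κ + 1`, the smaller of `κ₁, κ₂` is at most `3κ/4`, so its logarithm is smaller than
`log₂ κ` by at least `log₂ (4/3) ≥ 2/5`. Whichever half of the input it is paired with has size at
least `⌊n/2⌋ ≥ n/3`, and the resulting saving `8 c · (2/5) · n/3 ≥ c n` pays for the merge cost.
-/

open Real

lemma two_fifths_add_logb_two_le {x y : ℝ} (hx : 0 < x) (hxy : 4 * x ≤ 3 * y) :
    2 / 5 + logb 2 x ≤ logb 2 y := by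
  have h_four_thirds : 2 / 5 ≤ logb 2 (4 / 3) := by
    have h : logb 2 ((2 : ℝ) ^ 2) ≤ logb 2 ((4 / 3 : ℝ) ^ 5) :=
      logb_le_logb_of_le one_lt_two (by norm_num) (by norm_num)
    rw [logb_pow, logb_pow, logb_self_eq_one one_lt_two] at h
    linarith
  calc 2 / 5 + logb 2 x ≤ logb 2 (4 / 3) + logb 2 x := by gcongr
    _ = logb 2 (4 / 3 * x) := (logb_mul (by norm_num) hx.ne').symm
    _ ≤ logb 2 y := logb_le_logb_of_le one_lt_two (by positivity) (by linarith)

lemma monotone_logb_two_natCast : Monotone fun k : ℕ => logb 2 (k : ℝ) := by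
  intro k l hkl
  rcases Nat.eq_zero_or_pos k with rfl | hk
  · show logb 2 ((0 : ℕ) : ℝ) ≤ logb 2 l
    rw [Nat.cast_zero, logb_zero]
    exact div_nonneg (log_natCast_nonneg l) (log_nonneg one_le_two)
  · exact logb_le_logb_of_le one_lt_two (by exact_mod_cast hk) (by exact_mod_cast hkl)

lemma two_fifths_add_logb_two_min_le {κ κ₁ κ₂ : ℕ} (hκ : 2 ≤ κ) (hκ₁ : 0 < κ₁) (hκ₂ : 0 < κ₂)
    (hsum : κ₁ + κ₂ ≤ κ + 1) :
    2 / 5 + min (logb 2 (κ₁ : ℝ)) (logb 2 (κ₂ : ℝ)) ≤ logb 2 (κ : ℝ) := by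
  rw [← monotone_logb_two_natCast.map_min]
  exact two_fifths_add_logb_two_le (by positivity)
    (by exact_mod_cast (by omega : 4 * min κ₁ κ₂ ≤ 3 * κ))

lemma mul_add_mul_add_mul_le_of_add_min_le {a b x x₁ x₂ δ : ℝ} (hb : 0 ≤ b) (hba : b ≤ a)
    (hx₁ : x₁ ≤ x) (hx₂ : x₂ ≤ x) (hmin : δ + min x₁ x₂ ≤ x) :
    a * x₁ + b * x₂ + δ * b ≤ (a + b) * x := by
  rcases min_choice x₁ x₂ with h | h <;> rw [h] at hmin <;> nlinarith

theorem le_eight_mul_one_add_logb_of_divide_and_conquer {c : ℝ} (hc : 0 ≤ c)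
    {T : ℕ × ℕ → ℝ} (hbase : ∀ n κ : ℕ, n ≤ 1 ∨ κ ≤ 1 → T (n, κ) ≤ c * n)
    (hrec : ∀ n κ : ℕ, 2 ≤ n → 2 ≤ κ →
      ∃ κ₁ κ₂ : ℕ, 0 < κ₁ ∧ 0 < κ₂ ∧ κ₁ + κ₂ ≤ κ + 1 ∧
        T (n, κ) ≤ T ((n + 1) / 2, κ₁) + T (n / 2, κ₂) + c * n)
    (n κ : ℕ) (hn : 1 ≤ n) (hκ : 1 ≤ κ) :
    T (n, κ) ≤ 8 * c * n * (1 + logb 2 κ) := by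
  induction n using Nat.strong_induction_on generalizing κ with
  | _ n ih =>
  have hlogκ : 0 ≤ logb 2 (κ : ℝ) := logb_nonneg one_lt_two (by exact_mod_cast hκ)
  by_cases hsmall : n ≤ 1 ∨ κ ≤ 1
  · calc T (n, κ) ≤ c * n := hbase n κ hsmall
      _ ≤ 8 * c * n * (1 + logb 2 κ) := by
        have : 0 ≤ c * n := by positivity
        nlinarith
  obtain ⟨hn, hκ⟩ : 2 ≤ n ∧ 2 ≤ κ := by omega
  obtain ⟨κ₁, κ₂, hκ₁, hκ₂, hsum, hT⟩ := hrec n κ hn hκ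
  have iha := ih ((n + 1) / 2) (by omega) κ₁ (by omega) hκ₁
  have ihb := ih (n / 2) (by omega) κ₂ (by omega) hκ₂
  have hlog₁ : logb 2 (κ₁ : ℝ) ≤ logb 2 (κ : ℝ) := monotone_logb_two_natCast (by omega)
  have hlog₂ : logb 2 (κ₂ : ℝ) ≤ logb 2 (κ : ℝ) := monotone_logb_two_natCast (by omega)
  have hmin := two_fifths_add_logb_two_min_le hκ hκ₁ hκ₂ hsum
  have hhalves : (((n + 1) / 2 : ℕ) : ℝ) + ((n / 2 : ℕ) : ℝ) = n := by
    exact_mod_cast (by omega : (n + 1) / 2 + n / 2 = n)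
  have hthird : (n : ℝ) ≤ 3 * ((n / 2 : ℕ) : ℝ) := by exact_mod_cast (by omega : n ≤ 3 * (n / 2))
  have hsaving := mul_add_mul_add_mul_le_of_add_min_le (a := (((n + 1) / 2 : ℕ) : ℝ))
    (b := ((n / 2 : ℕ) : ℝ)) (by positivity) (by exact_mod_cast (by omega : n / 2 ≤ (n + 1) / 2))
    hlog₁ hlog₂ hmin
  rw [hhalves] at hsaving
  calc T (n, κ) ≤ T ((n + 1) / 2, κ₁) + T (n / 2, κ₂) + c * n := hT
    _ ≤ 8 * c * (((n + 1) / 2 : ℕ) * (1 + logb 2 κ₁) + (n / 2 : ℕ) * (1 + logb 2 κ₂))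
        + c * n := by linarith
    _ ≤ 8 * c * (n * (1 + logb 2 κ) - 2 / 5 * (n / 2 : ℕ)) + c * n := by gcongr; linarith
    _ ≤ 8 * c * n * (1 + logb 2 κ) := by nlinarith [mul_nonneg hc (sub_nonneg.2 hthird)]

theorem divide_and_conquer_recursion_solution :
    ∃ C : ℝ, 0 < C ∧
      ∀ c : ℝ, 0 < c →
        ∀ T : ℕ × ℕ → ℝ,
          (∀ n κ : ℕ, 0 ≤ T (n, κ)) →
          (∀ n κ : ℕ, n ≤ 1 ∨ κ ≤ 1 → T (n, κ) ≤ c * n) →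
          (∀ n κ : ℕ, 2 ≤ n → 2 ≤ κ →
            ∃ κ₁ κ₂ : ℕ, 0 < κ₁ ∧ 0 < κ₂ ∧ κ₁ + κ₂ ≤ κ + 1 ∧
              T (n, κ) ≤ T ((n + 1) / 2, κ₁) + T (n / 2, κ₂) + c * n) →
          ∀ n κ : ℕ, 1 ≤ n → 1 ≤ κ →
            T (n, κ) ≤ C * c * n * (1 + Real.logb 2 κ) :=
  ⟨8, by norm_num, fun _ hc _ _ hbase hrec =>
    le_eight_mul_one_add_logb_of_divide_and_conquer hc.le hbase hrec⟩
end
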